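/- arXiv:1905.03927 — 3 statements merged into one kernel-verified Lean document; each statement's English description precedes it below -/
import Mathlib

section
/- Let S and A be finite nonempty sets, p : S × A × S → ℝ with p(j|i,a) ≥ 0 and Σ_{j∈S} p(j|i,a) = 1 for all (i,a), r : S × A → ℝ, 0 ≤ γ < 1, and N > 0. The modified Bellman operator U defined by (UQ)(i,a) = r(i,a) + γ·Σ_{j∈S} p(j|i,a)·(1/N)·log(Σ_{b∈A} e^{N·Q(j,b)}) is a contraction with factor γ in the sup norm: for all P, Q : S × A → ℝ, ‖UP − UQ‖ ≤ γ·‖P − Q‖. -/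
/-! The inner term `(1/N) log Σ_b e^{N Q(j,b)}` of `U` is a smooth maximum of `Q(j, ·)`: it is
monotone and commutes with adding a constant, hence is 1-Lipschitz for the sup norm.
Averaging over `j` with the probabilities `p(·|i,a)` keeps the Lipschitz constant 1, and the
factor `γ` then gives the contraction. -/

/-- The modified (log-sum-exp) Bellman operator `U`:
`(UQ)(i,a) = r(i,a) + γ·Σ_j p(j|i,a)·(1/N)·log(Σ_b e^{N·Q(j,b)})`. -/
noncomputable def modBellmanU {S A : Type*} [Fintype S] [Fintype A]
    (p : S → A → S → ℝ) (r : S → A → ℝ) (γ N : ℝ) (Q : S → A → ℝ) : S → A → ℝ :=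
  fun i a => r i a + γ * ∑ j, p i a j *
    ((1 / N) * Real.log (∑ b, Real.exp (N * Q j b)))

/-- Sup norm of a Q-function: `‖Q‖ = max_{(i,a)} |Q(i,a)|`. -/
noncomputable def qSupNorm {S A : Type*} [Fintype S] [Fintype A] [Nonempty S] [Nonempty A]
    (Q : S → A → ℝ) : ℝ :=
  Finset.univ.sup' Finset.univ_nonempty (fun ia : S × A => |Q ia.1 ia.2|)

open Finset Real

noncomputable def smoothMax {ι : Type*} [Fintype ι] (N : ℝ) (f : ι → ℝ) : ℝ :=
  (1 / N) * log (∑ b, exp (N * f b))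

section SmoothMax

variable {ι : Type*} [Fintype ι] [Nonempty ι]

lemma log_sum_exp_mul_add_const (N c : ℝ) (f : ι → ℝ) :
    log (∑ b, exp (N * (f b + c))) = N * c + log (∑ b, exp (N * f b)) := by
  have hsum : ∑ b, exp (N * (f b + c)) = exp (N * c) * ∑ b, exp (N * f b) := by
    rw [mul_sum]
    exact sum_congr rfl fun b _ => by rw [← exp_add]; ring_nf
  have hpos : 0 < ∑ b, exp (N * f b) := sum_pos (fun _ _ => exp_pos _) univ_nonempty
  rw [hsum, log_mul (exp_ne_zero _) hpos.ne', log_exp]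

lemma log_sum_exp_mul_mono {N : ℝ} (hN : 0 ≤ N) {f g : ι → ℝ} (hfg : f ≤ g) :
    log (∑ b, exp (N * f b)) ≤ log (∑ b, exp (N * g b)) :=
  log_le_log (sum_pos (fun _ _ => exp_pos _) univ_nonempty) <|
    sum_le_sum fun b _ => exp_le_exp.mpr (mul_le_mul_of_nonneg_left (hfg b) hN)

lemma smoothMax_le_add_of_le {N : ℝ} (hN : 0 < N) {f g : ι → ℝ} {c : ℝ}
    (hfg : ∀ b, f b ≤ g b + c) : smoothMax N f ≤ smoothMax N g + c := by
  have hlog : log (∑ b, exp (N * f b)) ≤ N * c + log (∑ b, exp (N * g b)) :=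
    log_sum_exp_mul_add_const N c g ▸ log_sum_exp_mul_mono hN.le hfg
  calc smoothMax N f ≤ (1 / N) * (N * c + log (∑ b, exp (N * g b))) :=
        mul_le_mul_of_nonneg_left hlog (by positivity)
    _ = smoothMax N g + c := by
        unfold smoothMax
        field_simp
        ring

lemma abs_smoothMax_sub_le {N : ℝ} (hN : 0 < N) {f g : ι → ℝ} {c : ℝ}
    (hfg : ∀ b, |f b - g b| ≤ c) : |smoothMax N f - smoothMax N g| ≤ c := by
  have hfg' : smoothMax N f ≤ smoothMax N g + c :=
    smoothMax_le_add_of_le hN fun b => by linarith [(abs_sub_le_iff.mp (hfg b)).1]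
  have hgf : smoothMax N g ≤ smoothMax N f + c :=
    smoothMax_le_add_of_le hN fun b => by linarith [(abs_sub_le_iff.mp (hfg b)).2]
  exact abs_sub_le_iff.mpr ⟨by linarith, by linarith⟩

end SmoothMax

lemma abs_sum_mul_sub_sum_mul_le {ι : Type*} [Fintype ι] {p u v : ι → ℝ} {c : ℝ}
    (hp0 : ∀ j, 0 ≤ p j) (hp1 : ∑ j, p j = 1) (huv : ∀ j, |u j - v j| ≤ c) :
    |∑ j, p j * u j - ∑ j, p j * v j| ≤ c :=
  calc |∑ j, p j * u j - ∑ j, p j * v j|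
      = |∑ j, p j * (u j - v j)| := by simp only [mul_sub, sum_sub_distrib]
    _ ≤ ∑ j, |p j * (u j - v j)| := abs_sum_le_sum_abs _ _
    _ ≤ ∑ j, p j * c := sum_le_sum fun j _ => by
        rw [abs_mul, abs_of_nonneg (hp0 j)]
        exact mul_le_mul_of_nonneg_left (huv j) (hp0 j)
    _ = c := by rw [← sum_mul, hp1, one_mul]

section QSupNorm

variable {S A : Type*} [Fintype S] [Fintype A] [Nonempty S] [Nonempty A]

lemma qSupNorm_le_iff {Q : S → A → ℝ} {c : ℝ} : qSupNorm Q ≤ c ↔ ∀ i a, |Q i a| ≤ c := by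
  simp [qSupNorm, sup'_le_iff]

lemma abs_le_qSupNorm (Q : S → A → ℝ) (i : S) (a : A) : |Q i a| ≤ qSupNorm Q :=
  qSupNorm_le_iff.mp le_rfl i a

end QSupNorm

lemma modBellmanU_sub {S A : Type*} [Fintype S] [Fintype A] (p : S → A → S → ℝ)
    (r : S → A → ℝ) (γ N : ℝ) (P Q : S → A → ℝ) (i : S) (a : A) :
    modBellmanU p r γ N P i a - modBellmanU p r γ N Q i a =
      γ * (∑ j, p i a j * smoothMax N (P j) - ∑ j, p i a j * smoothMax N (Q j)) := by
  simp only [modBellmanU, smoothMax]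
  ring

theorem modBellmanU_contraction_general {S A : Type*} [Fintype S] [Fintype A] [Nonempty S] [Nonempty A]
    (p : S → A → S → ℝ) (hp0 : ∀ i a j, 0 ≤ p i a j) (hp1 : ∀ i a, ∑ j, p i a j = 1)
    (r : S → A → ℝ) (γ : ℝ) (hγ0 : 0 ≤ γ) (N : ℝ) (hN : 0 < N)
    (P Q : S → A → ℝ) :
    qSupNorm (fun i a => modBellmanU p r γ N P i a - modBellmanU p r γ N Q i a) ≤
      γ * qSupNorm (fun i a => P i a - Q i a) := by
  refine qSupNorm_le_iff.mpr fun i a => ?_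
  rw [modBellmanU_sub, abs_mul, abs_of_nonneg hγ0]
  gcongr
  refine abs_sum_mul_sub_sum_mul_le (hp0 i a) (hp1 i a) fun j => ?_
  exact abs_smoothMax_sub_le hN fun b => abs_le_qSupNorm (fun i a => P i a - Q i a) j b

/-- The modified Bellman operator is a sup-norm contraction with factor `γ`:
`‖UP − UQ‖ ≤ γ·‖P − Q‖`. -/
theorem modBellmanU_contraction {S A : Type*} [Fintype S] [Fintype A] [Nonempty S] [Nonempty A]
    (p : S → A → S → ℝ) (hp0 : ∀ i a j, 0 ≤ p i a j) (hp1 : ∀ i a, ∑ j, p i a j = 1)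
    (r : S → A → ℝ) (γ : ℝ) (hγ0 : 0 ≤ γ) (hγ1 : γ < 1) (N : ℝ) (hN : 0 < N)
    (P Q : S → A → ℝ) :
    qSupNorm (fun i a => modBellmanU p r γ N P i a - modBellmanU p r γ N Q i a) ≤
      γ * qSupNorm (fun i a => P i a - Q i a) :=
  modBellmanU_contraction_general p hp0 hp1 r γ hγ0 N hN P Q
end

section
/- Let S and A be finite nonempty sets, p : S × A × S → ℝ with p(j|i,a) ≥ 0 and Σ_{j∈S} p(j|i,a) = 1 for all (i,a), r : S × A → ℝ, and 0 ≤ γ < 1. Let Q be the unique fixed point of the Q-Bellman operator T and, for each N > 0, let Q'_N be the unique fixed point of the modified Bellman operator U with parameter N. Then ‖Q − Q'_N‖ → 0 as N → ∞ (in the sup norm). -/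
/-- The Q-Bellman operator `T`:
`(TQ)(i,a) = r(i,a) + γ·Σ_j p(j|i,a)·max_b Q(j,b)`. -/
noncomputable def bellmanT {S A : Type*} [Fintype S] [Fintype A] [Nonempty A]
    (p : S → A → S → ℝ) (r : S → A → ℝ) (γ : ℝ) (Q : S → A → ℝ) : S → A → ℝ :=
  fun i a => r i a + γ * ∑ j, p i a j *
    Finset.univ.sup' Finset.univ_nonempty (fun b => Q j b)

/-!
The log-sum-exp `(1/N) log Σ_b e^{N g(b)}` lies between `max g` and `max g + log |A| / N`.
Hence `T Q` and `U Q'` differ by at most `γ (‖Q - Q'‖ + log |A| / N)` in the sup norm, and at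
the fixed points this gives `‖Q - Q'_N‖ ≤ γ log |A| / ((1 - γ) N) → 0`.
-/

open Finset Real Filter

section LogSumExp

variable {A : Type*} [Fintype A]

noncomputable def logSumExp (N : ℝ) (g : A → ℝ) : ℝ :=
  (1 / N) * log (∑ b, exp (N * g b))

variable [Nonempty A]

lemma sup'_le_logSumExp (g : A → ℝ) {N : ℝ} (hN : 0 < N) :
    univ.sup' univ_nonempty g ≤ logSumExp N g := by
  obtain ⟨b₀, -, hb₀⟩ := exists_mem_eq_sup' univ_nonempty g
  have hsum : exp (N * g b₀) ≤ ∑ b, exp (N * g b) :=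
    single_le_sum (f := fun b => exp (N * g b)) (fun b _ => (exp_pos _).le) (mem_univ b₀)
  have hlog : N * g b₀ ≤ log (∑ b, exp (N * g b)) :=
    (le_log_iff_exp_le (sum_pos (fun b _ => exp_pos _) univ_nonempty)).mpr hsum
  rw [hb₀, logSumExp, one_div_mul_eq_div, le_div_iff₀ hN]
  linarith

lemma logSumExp_le_sup'_add (g : A → ℝ) {N : ℝ} (hN : 0 < N) :
    logSumExp N g ≤ univ.sup' univ_nonempty g + log (Fintype.card A) / N := by
  set s := univ.sup' univ_nonempty g
  have hcard : (0 : ℝ) < Fintype.card A := by exact_mod_cast Fintype.card_pos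
  have hsum : ∑ b, exp (N * g b) ≤ Fintype.card A * exp (N * s) := by
    calc ∑ b, exp (N * g b) ≤ ∑ _b : A, exp (N * s) :=
          sum_le_sum fun b _ => exp_le_exp.mpr
            (mul_le_mul_of_nonneg_left (le_sup' g (mem_univ b)) hN.le)
      _ = Fintype.card A * exp (N * s) := by simp
  have hlog : log (∑ b, exp (N * g b)) ≤ log (Fintype.card A) + N * s := by
    calc log (∑ b, exp (N * g b)) ≤ log (Fintype.card A * exp (N * s)) :=
          log_le_log (sum_pos (fun b _ => exp_pos _) univ_nonempty) hsum
      _ = log (Fintype.card A) + N * s := by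
          rw [log_mul hcard.ne' (exp_ne_zero _), log_exp]
  calc logSumExp N g ≤ (1 / N) * (log (Fintype.card A) + N * s) :=
        mul_le_mul_of_nonneg_left hlog (by positivity)
    _ = s + log (Fintype.card A) / N := by field_simp; ring

lemma sup'_le_sup'_add_norm_sub (f g : A → ℝ) :
    univ.sup' univ_nonempty f ≤ univ.sup' univ_nonempty g + ‖f - g‖ :=
  sup'_le _ _ fun b _ => by
    have hfg : f b - g b ≤ ‖f - g‖ := (le_abs_self _).trans (norm_le_pi_norm (f - g) b)
    linarith [le_sup' g (mem_univ b)]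

lemma abs_sup'_sub_logSumExp_le (f g : A → ℝ) {N : ℝ} (hN : 0 < N) :
    |univ.sup' univ_nonempty f - logSumExp N g| ≤ ‖f - g‖ + log (Fintype.card A) / N := by
  have hcard : 0 ≤ log (Fintype.card A) / N :=
    div_nonneg (log_natCast_nonneg _) hN.le
  have hfg := sup'_le_sup'_add_norm_sub f g
  have hgf := sup'_le_sup'_add_norm_sub g f
  rw [norm_sub_rev] at hgf
  rw [abs_le]
  constructor <;>
    linarith [sup'_le_logSumExp g hN, logSumExp_le_sup'_add g hN]

end LogSumExp

lemma abs_sum_mul_le_of_abs_le {S : Type*} [Fintype S] {p x : S → ℝ} {C : ℝ}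
    (hp0 : ∀ j, 0 ≤ p j) (hp1 : ∑ j, p j = 1) (hx : ∀ j, |x j| ≤ C) :
    |∑ j, p j * x j| ≤ C :=
  calc |∑ j, p j * x j| ≤ ∑ j, |p j * x j| := abs_sum_le_sum_abs _ _
    _ ≤ ∑ j, p j * C := sum_le_sum fun j _ => by
        rw [abs_mul, abs_of_nonneg (hp0 j)]
        exact mul_le_mul_of_nonneg_left (hx j) (hp0 j)
    _ = C := by rw [← sum_mul, hp1, one_mul]

section Bellman

variable {S A : Type*} [Fintype S] [Fintype A] [Nonempty A]

lemma qSupNorm_eq_norm [Nonempty S] (Q : S → A → ℝ) : qSupNorm Q = ‖Q‖ := by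
  refine le_antisymm (sup'_le _ _ fun ia _ => ?_) ?_
  · exact (norm_le_pi_norm (Q ia.1) ia.2).trans (norm_le_pi_norm Q ia.1)
  · have hnonneg : 0 ≤ qSupNorm Q :=
      (abs_nonneg _).trans (le_sup' (fun ia : S × A => |Q ia.1 ia.2|)
        (mem_univ (Classical.arbitrary (S × A))))
    refine (pi_norm_le_iff_of_nonneg hnonneg).mpr fun i => ?_
    refine (pi_norm_le_iff_of_nonneg hnonneg).mpr fun a => ?_
    exact le_sup' (fun ia : S × A => |Q ia.1 ia.2|) (mem_univ (i, a))

lemma norm_bellmanT_sub_modBellmanU_le {p : S → A → S → ℝ}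
    (hp0 : ∀ i a j, 0 ≤ p i a j) (hp1 : ∀ i a, ∑ j, p i a j = 1)
    {r : S → A → ℝ} {γ : ℝ} (hγ0 : 0 ≤ γ) {N : ℝ} (hN : 0 < N) (Q Q' : S → A → ℝ) :
    ‖bellmanT p r γ Q - modBellmanU p r γ N Q'‖ ≤
      γ * (‖Q - Q'‖ + log (Fintype.card A) / N) := by
  have hbound : 0 ≤ γ * (‖Q - Q'‖ + log (Fintype.card A) / N) :=
    mul_nonneg hγ0 (add_nonneg (norm_nonneg _) (div_nonneg (log_natCast_nonneg _) hN.le))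
  refine (pi_norm_le_iff_of_nonneg hbound).mpr fun i => ?_
  refine (pi_norm_le_iff_of_nonneg hbound).mpr fun a => ?_
  have hdiff : bellmanT p r γ Q i a - modBellmanU p r γ N Q' i a =
      γ * ∑ j, p i a j * (univ.sup' univ_nonempty (Q j) - logSumExp N (Q' j)) := by
    simp only [bellmanT, modBellmanU, logSumExp, mul_sub, sum_sub_distrib]
    ring
  have hterm : ∀ j, |univ.sup' univ_nonempty (Q j) - logSumExp N (Q' j)| ≤
      ‖Q - Q'‖ + log (Fintype.card A) / N := fun j =>
    (abs_sup'_sub_logSumExp_le (Q j) (Q' j) hN).trans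
      (by gcongr; exact norm_le_pi_norm (Q - Q') j)
  rw [Pi.sub_apply, Pi.sub_apply, Real.norm_eq_abs, hdiff, abs_mul, abs_of_nonneg hγ0]
  exact mul_le_mul_of_nonneg_left (abs_sum_mul_le_of_abs_le (hp0 i a) (hp1 i a) hterm) hγ0

lemma norm_sub_le_of_bellman_fixedPoints {p : S → A → S → ℝ}
    (hp0 : ∀ i a j, 0 ≤ p i a j) (hp1 : ∀ i a, ∑ j, p i a j = 1)
    {r : S → A → ℝ} {γ : ℝ} (hγ0 : 0 ≤ γ) (hγ1 : γ < 1) {N : ℝ} (hN : 0 < N)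
    {Q Q' : S → A → ℝ} (hQ : bellmanT p r γ Q = Q) (hQ' : modBellmanU p r γ N Q' = Q') :
    ‖Q - Q'‖ ≤ γ * log (Fintype.card A) / (1 - γ) / N := by
  have h := norm_bellmanT_sub_modBellmanU_le (r := r) hp0 hp1 hγ0 hN Q Q'
  rw [hQ, hQ'] at h
  rw [div_div, le_div_iff₀ (mul_pos (sub_pos.mpr hγ1) hN)]
  have hsplit : γ * (‖Q - Q'‖ + log (Fintype.card A) / N) * N =
      γ * ‖Q - Q'‖ * N + γ * log (Fintype.card A) := by
    field_simp
  linarith [mul_le_mul_of_nonneg_right h hN.le]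

end Bellman

/-- If `Q` is the fixed point of `T` and `Q'_N` is, for each `N > 0`, the fixed point of
the modified Bellman operator with parameter `N`, then `‖Q − Q'_N‖ → 0` as `N → ∞`. -/
theorem fixedPoint_dist_tendsto_zero {S A : Type*}
    [Fintype S] [Fintype A] [Nonempty S] [Nonempty A]
    (p : S → A → S → ℝ) (hp0 : ∀ i a j, 0 ≤ p i a j) (hp1 : ∀ i a, ∑ j, p i a j = 1)
    (r : S → A → ℝ) (γ : ℝ) (hγ0 : 0 ≤ γ) (hγ1 : γ < 1)
    (Q : S → A → ℝ) (hQ : bellmanT p r γ Q = Q)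
    (Q' : ℝ → S → A → ℝ) (hQ' : ∀ N : ℝ, 0 < N → modBellmanU p r γ N (Q' N) = Q' N) :
    Filter.Tendsto (fun N : ℝ => qSupNorm (fun i a => Q i a - Q' N i a))
      Filter.atTop (nhds 0) := by
  have hbound : Tendsto (fun N : ℝ => γ * log (Fintype.card A) / (1 - γ) / N) atTop (nhds 0) :=
    tendsto_const_nhds.div_atTop tendsto_id
  refine squeeze_zero' (Eventually.of_forall fun N => ?_) ?_ hbound
  · exact (qSupNorm_eq_norm (Q - Q' N)).trans_ge (norm_nonneg _)
  · filter_upwards [eventually_gt_atTop 0] with N hN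
    exact (qSupNorm_eq_norm (Q - Q' N)).trans_le
      (norm_sub_le_of_bellman_fixedPoints hp0 hp1 hγ0 hγ1 hN hQ (hQ' N hN))
end

section
/- (Global Newton Theorem) Let F : ℝ^d → ℝ^d be continuously differentiable, with each component function x ↦ F_i(x) concave on ℝ^d. Suppose that for every x ∈ ℝ^d the Jacobian matrix F'(x) is invertible and every entry of F'(x)^{-1} is nonnegative, and that F(x) = 0 has a unique solution x* ∈ ℝ^d. Then for any starting point x_0 ∈ ℝ^d, the Newton iterates x_n = x_{n−1} − F'(x_{n−1})^{-1}·F(x_{n−1}), n ≥ 1, converge to x*. -/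
/-!
Concavity of the components gives the tangent inequality `F y ≤ F x + F'(x) (y - x)`.
Taking `y` to be the Newton step from `x` shows `F ≤ 0` at every iterate after the first;
taking `y = x*` and applying the nonnegative matrix `F'(x)⁻¹` then gives `x ≤ x*` there,
and `F(x) ≤ 0` also makes the next Newton step increase `x`. So from the first iterate on
the sequence increases and is bounded by `x*`, hence converges, and the limit is a root of
`F` because `F(x_n) = F'(x_n)(x_n - x_{n+1})` with `F'` continuous. Uniqueness identifies it
with `x*`.
-/

/-- The Jacobian matrix of a map `F : ℝ^d → ℝ^d` at `x`:
`(i,j)` entry is `∂F_i/∂x_j (x)`. -/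
noncomputable def jacobianMatrix {d : ℕ} (F : (Fin d → ℝ) → (Fin d → ℝ))
    (x : Fin d → ℝ) : Matrix (Fin d) (Fin d) ℝ :=
  Matrix.of fun i j => fderiv ℝ F x (Pi.single j 1) i


open Filter Topology Matrix

section Tangent

variable {E : Type*} [NormedAddCommGroup E] [NormedSpace ℝ E]

theorem ConcaveOn.le_add_apply_sub_of_hasFDerivAt {g : E → ℝ} {g' : E →L[ℝ] ℝ} {a : E}
    (hg : ConcaveOn ℝ Set.univ g) (hd : HasFDerivAt g g' a) (b : E) :
    g b ≤ g a + g' (b - a) := by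
  have hline : ConcaveOn ℝ Set.univ (g ∘ AffineMap.lineMap (k := ℝ) a b) := by
    simpa using hg.comp_affineMap (AffineMap.lineMap (k := ℝ) a b)
  have hderiv : HasDerivAt (g ∘ AffineMap.lineMap (k := ℝ) a b) (g' (b - a)) 0 := by
    refine HasFDerivAt.comp_hasDerivAt (0 : ℝ) ?_ AffineMap.hasDerivAt_lineMap
    simpa using hd
  have := hline.slope_le_of_hasDerivAt (Set.mem_univ 0) (Set.mem_univ 1) one_pos hderiv
  simp only [slope_def_field, Function.comp_apply, AffineMap.lineMap_apply_zero,
    AffineMap.lineMap_apply_one, sub_zero, div_one] at this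
  linarith

theorem le_add_fderiv_apply_sub_of_concaveOn {ι : Type*} [Fintype ι] {F : E → ι → ℝ}
    (hF : Differentiable ℝ F) (hconc : ∀ i, ConcaveOn ℝ Set.univ fun x => F x i) (a b : E) :
    F b ≤ F a + fderiv ℝ F a (b - a) := fun i =>
  (hconc i).le_add_apply_sub_of_hasFDerivAt (hasFDerivAt_pi'.mp (hF a).hasFDerivAt i) b

end Tangent

theorem Matrix.mulVec_nonneg {m n R : Type*} [Fintype n] [Semiring R] [PartialOrder R]
    [IsOrderedRing R] {M : Matrix m n R} (hM : ∀ i j, 0 ≤ M i j) {v : n → R} (hv : 0 ≤ v) :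
    0 ≤ M *ᵥ v := fun i =>
  Finset.sum_nonneg fun j _ => mul_nonneg (hM i j) (hv j)

theorem jacobianMatrix_mulVec {d : ℕ} (F : (Fin d → ℝ) → (Fin d → ℝ)) (a v : Fin d → ℝ) :
    jacobianMatrix F a *ᵥ v = fderiv ℝ F a v :=
  LinearMap.toMatrix'_mulVec (fderiv ℝ F a : (Fin d → ℝ) →ₗ[ℝ] Fin d → ℝ) v

theorem apply_eq_zero_of_tendsto_of_fderiv_apply_sub {E G : Type*} [NormedAddCommGroup E]
    [NormedSpace ℝ E] [NormedAddCommGroup G] [NormedSpace ℝ G] {f : E → G} (hf : ContDiff ℝ 1 f)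
    {x : ℕ → E} {L : E} (hx : Tendsto x atTop (𝓝 L))
    (hstep : ∀ n, fderiv ℝ f (x n) (x n - x (n + 1)) = f (x n)) : f L = 0 := by
  have hincr : Tendsto (fun n => x n - x (n + 1)) atTop (𝓝 0) := by
    simpa using hx.sub (hx.comp (tendsto_add_atTop_nat 1))
  have hderiv : Tendsto (fun n => fderiv ℝ f (x n)) atTop (𝓝 (fderiv ℝ f L)) :=
    ((hf.continuous_fderiv one_ne_zero).tendsto L).comp hx
  have hlin : Tendsto (fun n => f (x n)) atTop (𝓝 (fderiv ℝ f L 0)) := by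
    simp_rw [← hstep]
    exact (isBoundedBilinearMap_apply.continuous.tendsto _).comp (hderiv.prodMk_nhds hincr)
  simpa using tendsto_nhds_unique ((hf.continuous.tendsto L).comp hx) hlin

noncomputable def newtonStep {d : ℕ} (F : (Fin d → ℝ) → (Fin d → ℝ)) (a : Fin d → ℝ) :
    Fin d → ℝ :=
  a - (jacobianMatrix F a)⁻¹ *ᵥ F a

section NewtonStep

variable {d : ℕ} {F : (Fin d → ℝ) → (Fin d → ℝ)} {a : Fin d → ℝ}

theorem fderiv_apply_sub_newtonStep (hinv : IsUnit (jacobianMatrix F a)) :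
    fderiv ℝ F a (a - newtonStep F a) = F a := by
  rw [newtonStep, sub_sub_cancel, ← jacobianMatrix_mulVec, mulVec_mulVec,
    mul_nonsing_inv _ ((isUnit_iff_isUnit_det _).mp hinv), one_mulVec]

theorem apply_newtonStep_nonpos (hF : Differentiable ℝ F)
    (hconc : ∀ i, ConcaveOn ℝ Set.univ fun x => F x i) (hinv : IsUnit (jacobianMatrix F a)) :
    F (newtonStep F a) ≤ 0 := by
  have := le_add_fderiv_apply_sub_of_concaveOn hF hconc a (newtonStep F a)
  rwa [← neg_sub, map_neg, fderiv_apply_sub_newtonStep hinv, add_neg_cancel] at this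

theorem le_newtonStep_of_apply_nonpos (hpos : ∀ i j, 0 ≤ (jacobianMatrix F a)⁻¹ i j)
    (ha : F a ≤ 0) : a ≤ newtonStep F a := by
  have := Matrix.mulVec_nonneg hpos (neg_nonneg.mpr ha)
  rw [mulVec_neg, neg_nonneg] at this
  exact le_sub_iff_add_le.mpr (add_le_of_nonpos_right this)

theorem le_of_apply_nonpos_of_apply_eq_zero (hF : Differentiable ℝ F)
    (hconc : ∀ i, ConcaveOn ℝ Set.univ fun x => F x i) (hinv : IsUnit (jacobianMatrix F a))
    (hpos : ∀ i j, 0 ≤ (jacobianMatrix F a)⁻¹ i j) (ha : F a ≤ 0) {b : Fin d → ℝ}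
    (hb : F b = 0) : a ≤ b := by
  have htangent := le_add_fderiv_apply_sub_of_concaveOn hF hconc a b
  rw [hb, ← jacobianMatrix_mulVec] at htangent
  have := Matrix.mulVec_nonneg hpos (htangent.trans (add_le_of_nonpos_left ha))
  rwa [mulVec_mulVec, nonsing_inv_mul _ ((isUnit_iff_isUnit_det _).mp hinv), one_mulVec,
    sub_nonneg] at this

end NewtonStep

/-- **Global Newton Theorem.** If `F : ℝ^d → ℝ^d` is continuously differentiable with
each component concave, the Jacobian `F'(x)` is everywhere invertible with entrywise
nonnegative inverse, and `F(x) = 0` has a unique solution `x*`, then from any starting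
point the Newton iterates `x_{n+1} = x_n − F'(x_n)⁻¹ F(x_n)` converge to `x*`. -/
theorem global_newton (d : ℕ) (F : (Fin d → ℝ) → (Fin d → ℝ))
    (hF : ContDiff ℝ 1 F)
    (hconc : ∀ i : Fin d, ConcaveOn ℝ Set.univ (fun x => F x i))
    (hinv : ∀ x : Fin d → ℝ, IsUnit (jacobianMatrix F x))
    (hpos : ∀ (x : Fin d → ℝ) (i j : Fin d), 0 ≤ (jacobianMatrix F x)⁻¹ i j)
    (xstar : Fin d → ℝ) (hroot : F xstar = 0)
    (huniq : ∀ y : Fin d → ℝ, F y = 0 → y = xstar)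
    (x : ℕ → Fin d → ℝ)
    (hiter : ∀ n : ℕ, x (n + 1) = x n - (jacobianMatrix F (x n))⁻¹.mulVec (F (x n))) :
    Filter.Tendsto x Filter.atTop (nhds xstar) := by
  have hdiff : Differentiable ℝ F := hF.differentiable one_ne_zero
  have hstep : ∀ n, x (n + 1) = newtonStep F (x n) := hiter
  have hnonpos : ∀ n, F (x (n + 1)) ≤ 0 := fun n => by
    rw [hstep n]
    exact apply_newtonStep_nonpos hdiff hconc (hinv _)
  have hmono : Monotone fun n => x (n + 1) := monotone_nat_of_le_succ fun n => by
    rw [hstep (n + 1)]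
    exact le_newtonStep_of_apply_nonpos (hpos _) (hnonpos n)
  have hbdd : BddAbove (Set.range fun n => x (n + 1)) := ⟨xstar, Set.forall_mem_range.mpr
    fun n => le_of_apply_nonpos_of_apply_eq_zero hdiff hconc (hinv _) (hpos _) (hnonpos n) hroot⟩
  -- monotone convergence in `Fin d → ℝ` with its componentwise order (`Pi.supConvergenceClass`)
  have hlim := tendsto_atTop_ciSup hmono hbdd
  have hlim_root := apply_eq_zero_of_tendsto_of_fderiv_apply_sub hF hlim fun n => by
    rw [hstep (n + 1)]
    exact fderiv_apply_sub_newtonStep (hinv _)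
  rw [huniq _ hlim_root] at hlim
  exact (tendsto_add_atTop_iff_nat 1).mp hlim
end
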